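/- arXiv:1702.04813 — 2 statements merged into one kernel-verified Lean document; each statement's English description precedes it below -/
import Mathlib

section
/- The convex hull of {(x,z) ∈ {0,1}^n × ℝ : z = ψ(x)} equals the set of (x,z) with x ∈ [0,1]^n and ψ_−(x) ≤ z ≤ ψ_+(x), where ψ_−(x) (resp. ψ_+(x)) is the minimum (resp. maximum) of Σ_{ξ∈{0,1}^n} μ(R_ξ(X_1,...,X_n)) ψ(ξ) over all sets X_1,...,X_n ⊆ [0,1), each a finite union of half-open intervals, with μ(X_i) = x_i for all i, and R_ξ(X_1,...,X_n) = {t ∈ [0,1) : for all i, t ∈ X_i iff ξ_i = 1}. -/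
open MeasureTheory Set

/-- A finite union of half-open subintervals of `[0,1)`. -/
def IsIcoUnion (X : Set ℝ) : Prop :=
  X ⊆ Set.Ico 0 1 ∧ ∃ s : Finset (ℝ × ℝ), X = ⋃ p ∈ s, Set.Ico p.1 p.2

/-- The set of values `∑_{ξ ∈ {0,1}^n} μ(R_ξ(X_1,…,X_n)) ψ(ξ)` over all admissible
families of interval unions with `μ(X_i) = x i`, where `R_ξ` is the set of points
whose membership pattern in the `X_i` equals `ξ`. -/
def zuckerValues (n : ℕ) (ψ : (Fin n → ℝ) → ℝ) (x : Fin n → ℝ) : Set ℝ :=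
  {w : ℝ | ∃ X : Fin n → Set ℝ, (∀ i, IsIcoUnion (X i)) ∧
    (∀ i, (volume (X i)).toReal = x i) ∧
    w = ∑ ξ : Fin n → Bool,
      (volume {t ∈ Set.Ico (0:ℝ) 1 | ∀ i, t ∈ X i ↔ ξ i = true}).toReal
        * ψ (fun i => if ξ i then 1 else 0)}

/-! A point `(x, z)` lies in the convex hull of the graph of `ψ` on `{0,1}^n` exactly when
`z = ∑ w ξ * ψ ξ` for a probability vector `w` on `{0,1}^n` with barycentre `x`. An admissible
family gives such weights, `w ξ = μ(R_ξ)`; conversely, lay out disjoint intervals of lengths `w ξ`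
in `[0,1)` and let `X i` be the union of those with `ξ i = true`.
So the fibre of the hull over `x` is `zuckerValues n ψ x`; as a compact convex subset of `ℝ`,
nonempty exactly when `x ∈ [0,1]^n`, it is the interval between its infimum and supremum. -/

theorem IsIcoUnion.measurableSet {X : Set ℝ} (hX : IsIcoUnion X) : MeasurableSet X := by
  obtain ⟨-, s, rfl⟩ := hX
  exact s.measurableSet_biUnion fun p _ => measurableSet_Ico

theorem convexHull_range_eq_image_stdSimplex {𝕜 E ι : Type*} [Field 𝕜] [LinearOrder 𝕜]
    [IsStrictOrderedRing 𝕜] [AddCommGroup E] [Module 𝕜 E] [Fintype ι] (v : ι → E) :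
    convexHull 𝕜 (range v) = (fun w : ι → 𝕜 => ∑ i, w i • v i) '' stdSimplex 𝕜 ι := by
  classical
  have : (fun w : ι → 𝕜 => ∑ i, w i • v i) = Fintype.linearCombination 𝕜 v := by
    ext w; rw [Fintype.linearCombination_apply]
  rw [this, ← convexHull_basis_eq_stdSimplex, LinearMap.image_convexHull, ← range_comp]
  congr 2
  ext i
  simp [Fintype.linearCombination_apply]

open Function in
theorem exists_pairwise_disjoint_Ico {α ι : Type*} [AddCommMonoid α] [LinearOrder α]
    [IsOrderedAddMonoid α] [Fintype ι] (w : ι → α) (hw : ∀ i, 0 ≤ w i) :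
    ∃ a : ι → α, (∀ i, Ico (a i) (a i + w i) ⊆ Ico 0 (∑ j, w j)) ∧
      Pairwise (Disjoint on fun i => Ico (a i) (a i + w i)) := by
  classical
  let _ : LinearOrder ι := LinearOrder.lift' _ (Fintype.equivFin ι).injective
  set a : ι → α := fun i => ∑ j ∈ Finset.univ.filter (· < i), w j
  have a_add : ∀ i, a i + w i = ∑ j ∈ insert i (Finset.univ.filter (· < i)), w j := fun i => by
    rw [Finset.sum_insert (by simp), add_comm]
  have a_nonneg : ∀ i, 0 ≤ a i := fun i => Finset.sum_nonneg fun j _ => hw j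
  have sum_mono : ∀ {s t : Finset ι}, s ⊆ t → ∑ j ∈ s, w j ≤ ∑ j ∈ t, w j :=
    fun h => Finset.sum_le_sum_of_subset_of_nonneg h fun j _ _ => hw j
  have end_le : ∀ {i j}, i < j → a i + w i ≤ a j := fun {i j} hij => by
    rw [a_add]
    refine sum_mono fun k hk => ?_
    simp only [Finset.mem_insert, Finset.mem_filter, Finset.mem_univ, true_and] at hk ⊢
    rcases hk with rfl | hk
    exacts [hij, hk.trans hij]
  refine ⟨a, fun i => Ico_subset_Ico (a_nonneg i) (a_add i ▸ sum_mono (Finset.subset_univ _)),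
    fun i j hij => ?_⟩
  rcases hij.lt_or_gt with h | h
  · exact Ico_disjoint_Ico_same.mono_left (Ico_subset_Ico_right (end_le h))
  · exact (Ico_disjoint_Ico_same.mono_left (Ico_subset_Ico_right (end_le h))).symm

section PatternSet

open Function

variable {ι : Type*}

def cubeVertex (ξ : ι → Bool) : ι → ℝ := fun i => if ξ i then 1 else 0

def patternSet (X : ι → Set ℝ) (ξ : ι → Bool) : Set ℝ :=
  {t ∈ Ico (0 : ℝ) 1 | ∀ i, t ∈ X i ↔ ξ i = true}

variable {X : ι → Set ℝ}

theorem measurableSet_patternSet [Countable ι] (hX : ∀ i, MeasurableSet (X i)) (ξ : ι → Bool) :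
    MeasurableSet (patternSet X ξ) :=
  measurableSet_setOfPred.2 <| (measurable_mem.2 measurableSet_Ico).and <|
    Measurable.forall fun i => (measurable_mem.2 (hX i)).iff measurable_const

theorem pairwise_disjoint_patternSet : Pairwise (Disjoint on patternSet X) := by
  intro ξ η hne
  refine disjoint_left.2 fun t ht ht' => hne (funext fun i => ?_)
  exact Bool.eq_iff_iff.2 ((ht.2 i).symm.trans (ht'.2 i))

theorem iUnion_patternSet : ⋃ ξ, patternSet X ξ = Ico 0 1 := by
  classical
  refine Subset.antisymm (iUnion_subset fun ξ => sep_subset _ _) fun t ht => ?_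
  exact mem_iUnion.2 ⟨fun i => decide (t ∈ X i), ht, fun i => by simp⟩

theorem volume_patternSet_ne_top (ξ : ι → Bool) : volume (patternSet X ξ) ≠ ⊤ :=
  ((measure_mono (sep_subset _ _)).trans_lt measure_Ico_lt_top).ne

variable [Fintype ι] [DecidableEq ι]

theorem sum_measureReal_patternSet (hX : ∀ i, MeasurableSet (X i)) :
    ∑ ξ, volume.real (patternSet X ξ) = 1 := by
  rw [← measureReal_iUnion_fintype pairwise_disjoint_patternSet (measurableSet_patternSet hX)
    volume_patternSet_ne_top, iUnion_patternSet]
  simp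

theorem measureReal_eq_sum_patternSet (hX : ∀ i, MeasurableSet (X i))
    (hX01 : ∀ i, X i ⊆ Ico 0 1) (i : ι) :
    volume.real (X i) = ∑ ξ, volume.real (patternSet X ξ) * cubeVertex ξ i := by
  have inter_eq : ∀ ξ, X i ∩ patternSet X ξ = if ξ i then patternSet X ξ else ∅ := fun ξ => by
    ext t
    split_ifs with h
    · exact ⟨fun ht => ht.2, fun ht => ⟨(ht.2 i).2 h, ht⟩⟩
    · exact iff_of_false (fun ht => h ((ht.2.2 i).1 ht.1)) (notMem_empty t)
  calc volume.real (X i) = volume.real (⋃ ξ, X i ∩ patternSet X ξ) := by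
        rw [← inter_iUnion, iUnion_patternSet, inter_eq_left.2 (hX01 i)]
    _ = ∑ ξ, volume.real (X i ∩ patternSet X ξ) :=
        measureReal_iUnion_fintype
          (pairwise_disjoint_patternSet.mono fun _ _ h =>
            h.mono inter_subset_right inter_subset_right)
          (fun ξ => (hX i).inter (measurableSet_patternSet hX ξ))
          fun ξ => ne_top_of_le_ne_top (volume_patternSet_ne_top ξ)
            (measure_mono inter_subset_right)
    _ = _ := Finset.sum_congr rfl fun ξ _ => by
        rw [inter_eq, cubeVertex]
        split_ifs <;> simp

theorem exists_isIcoUnion_measureReal_patternSet_eq {w : (ι → Bool) → ℝ}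
    (hw : w ∈ stdSimplex ℝ (ι → Bool)) :
    ∃ X : ι → Set ℝ, (∀ i, IsIcoUnion (X i)) ∧ ∀ ξ, volume.real (patternSet X ξ) = w ξ := by
  obtain ⟨a, J_subset_Ico, J_disjoint⟩ := exists_pairwise_disjoint_Ico w hw.1
  rw [hw.2] at J_subset_Ico
  set J : (ι → Bool) → Set ℝ := fun ξ => Ico (a ξ) (a ξ + w ξ)
  set X : ι → Set ℝ := fun i => ⋃ ξ ∈ Finset.univ.filter (· i = true), J ξ
  have hX : ∀ i, IsIcoUnion (X i) := fun i =>
    ⟨iUnion₂_subset fun ξ _ => J_subset_Ico ξ,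
      (Finset.univ.filter (· i = true)).image fun ξ => (a ξ, a ξ + w ξ),
      by rw [Finset.set_biUnion_finset_image]⟩
  have J_subset : ∀ ξ, J ξ ⊆ patternSet X ξ := by
    intro ξ t ht
    refine ⟨J_subset_Ico ξ ht, fun i =>
      ⟨fun hti => ?_, fun hξ => mem_biUnion (by simpa using hξ) ht⟩⟩
    obtain ⟨η, hη, htη⟩ := mem_iUnion₂.1 hti
    obtain rfl : η = ξ := by_contra fun hne => disjoint_left.1 (J_disjoint hne) htη ht
    simpa using hη
  have le_volume : ∀ ξ ∈ Finset.univ, w ξ ≤ volume.real (patternSet X ξ) := fun ξ _ => by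
    calc w ξ = volume.real (J ξ) := by simp [J, hw.1 ξ]
      _ ≤ _ := measureReal_mono (J_subset ξ) (volume_patternSet_ne_top ξ)
  -- Each `J ξ` lies in its pattern set, and both families of measures sum to `1`.
  refine ⟨X, hX, fun ξ =>
    ((Finset.sum_eq_sum_iff_of_le le_volume).1 ?_ ξ (Finset.mem_univ ξ)).symm⟩
  rw [hw.2, sum_measureReal_patternSet fun i => (hX i).measurableSet]

end PatternSet

theorem mem_zuckerValues_iff {n : ℕ} {ψ : (Fin n → ℝ) → ℝ} {x : Fin n → ℝ} {z : ℝ} :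
    z ∈ zuckerValues n ψ x ↔ ∃ w ∈ stdSimplex ℝ (Fin n → Bool),
      ∑ ξ, w ξ • cubeVertex ξ = x ∧ ∑ ξ, w ξ * ψ (cubeVertex ξ) = z := by
  constructor
  · rintro ⟨X, hX, hvol, rfl⟩
    have hXm : ∀ i, MeasurableSet (X i) := fun i => (hX i).measurableSet
    refine ⟨fun ξ => volume.real (patternSet X ξ),
      ⟨fun ξ => measureReal_nonneg, sum_measureReal_patternSet hXm⟩, funext fun i => ?_, rfl⟩
    simpa [← hvol i, measureReal_def] using
      (measureReal_eq_sum_patternSet hXm (fun i => (hX i).1) i).symm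
  · rintro ⟨w, hw, rfl, rfl⟩
    obtain ⟨X, hX, hvol⟩ := exists_isIcoUnion_measureReal_patternSet_eq hw
    refine ⟨X, hX, fun i => ?_, Finset.sum_congr rfl fun ξ _ => by rw [← hvol ξ]; rfl⟩
    simpa [← hvol, measureReal_def] using
      measureReal_eq_sum_patternSet (fun i => (hX i).measurableSet) (fun i => (hX i).1) i

def vertexGraph {ι : Type*} (ψ : (ι → ℝ) → ℝ) : Set ((ι → ℝ) × ℝ) :=
  {p | (∀ i, p.1 i = 0 ∨ p.1 i = 1) ∧ p.2 = ψ p.1}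

theorem vertexGraph_eq_range {ι : Type*} (ψ : (ι → ℝ) → ℝ) :
    vertexGraph ψ = range fun ξ : ι → Bool => (cubeVertex ξ, ψ (cubeVertex ξ)) := by
  classical
  ext ⟨x, z⟩
  constructor
  · rintro ⟨hx, hz⟩
    simp only at hx hz
    have hv : cubeVertex (fun i => decide (x i = 1)) = x := funext fun i => by
      rcases hx i with h | h <;> simp [cubeVertex, h]
    exact ⟨fun i => decide (x i = 1), by simp only [hv, hz]⟩
  · rintro ⟨ξ, hξ⟩
    rw [← hξ]
    exact ⟨fun i => by by_cases h : ξ i <;> simp [cubeVertex, h], rfl⟩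

theorem mem_convexHull_vertexGraph_iff {n : ℕ} {ψ : (Fin n → ℝ) → ℝ} {p : (Fin n → ℝ) × ℝ} :
    p ∈ convexHull ℝ (vertexGraph ψ) ↔ p.2 ∈ zuckerValues n ψ p.1 := by
  rw [vertexGraph_eq_range, convexHull_range_eq_image_stdSimplex, mem_zuckerValues_iff]
  simp [Prod.ext_iff, Prod.fst_sum, Prod.snd_sum]

theorem zuckerValues_eq_preimage_convexHull (n : ℕ) (ψ : (Fin n → ℝ) → ℝ) (x : Fin n → ℝ) :
    zuckerValues n ψ x = Prod.mk x ⁻¹' convexHull ℝ (vertexGraph ψ) :=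
  ext fun z => (mem_convexHull_vertexGraph_iff (p := (x, z))).symm

theorem isCompact_zuckerValues (n : ℕ) (ψ : (Fin n → ℝ) → ℝ) (x : Fin n → ℝ) :
    IsCompact (zuckerValues n ψ x) := by
  have hull_compact : IsCompact (convexHull ℝ (vertexGraph ψ)) := by
    rw [vertexGraph_eq_range]
    exact (finite_range _).isCompact_convexHull (𝕜 := ℝ)
  rw [zuckerValues_eq_preimage_convexHull]
  exact (hull_compact.image continuous_snd).of_isClosed_subset
    (hull_compact.isClosed.preimage (Continuous.prodMk_right x)) fun z hz => ⟨(x, z), hz, rfl⟩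

theorem convex_zuckerValues (n : ℕ) (ψ : (Fin n → ℝ) → ℝ) (x : Fin n → ℝ) :
    Convex ℝ (zuckerValues n ψ x) := by
  rw [zuckerValues_eq_preimage_convexHull]
  exact (convex_convexHull ℝ _).affine_preimage ((AffineMap.const ℝ ℝ x).prod (AffineMap.id ℝ ℝ))

theorem zuckerValues_nonempty_iff {n : ℕ} {ψ : (Fin n → ℝ) → ℝ} {x : Fin n → ℝ} :
    (zuckerValues n ψ x).Nonempty ↔ ∀ i, x i ∈ Icc 0 1 := by
  constructor
  · rintro ⟨z, X, hX, hvol, -⟩ i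
    rw [← hvol i]
    refine ⟨ENNReal.toReal_nonneg, ?_⟩
    simpa [measureReal_def] using measureReal_mono (hX i).1 (measure_Ico_lt_top (μ := volume)).ne
  · intro hx
    refine ⟨_, fun i => Ico 0 (x i), fun i => ⟨Ico_subset_Ico_right (hx i).2, {(0, x i)}, by simp⟩,
      fun i => ?_, rfl⟩
    simp [(hx i).1]

theorem zuckerValues_eq_Icc {n : ℕ} (ψ : (Fin n → ℝ) → ℝ) {x : Fin n → ℝ}
    (hx : ∀ i, x i ∈ Icc 0 1) :
    zuckerValues n ψ x = Icc (sInf (zuckerValues n ψ x)) (sSup (zuckerValues n ψ x)) :=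
  eq_Icc_of_connected_compact
    ⟨zuckerValues_nonempty_iff.2 hx, (convex_zuckerValues n ψ x).isPreconnected⟩
    (isCompact_zuckerValues n ψ x)

/-- Zuckerberg's characterization for the graph of an arbitrary function
`ψ : {0,1}^n → ℝ`: the convex hull of `{(x,z) : x ∈ {0,1}^n, z = ψ(x)}` equals the
set of `(x,z)` with `x ∈ [0,1]^n` and `ψ₋(x) ≤ z ≤ ψ₊(x)`, where `ψ₋` and `ψ₊` are
the min/max of `∑_ξ μ(R_ξ(X_1,…,X_n)) ψ(ξ)` over admissible families `X_i`. -/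
theorem stmt5 (n : ℕ) (ψ : (Fin n → ℝ) → ℝ) :
    convexHull ℝ {p : (Fin n → ℝ) × ℝ | (∀ i, p.1 i = 0 ∨ p.1 i = 1) ∧ p.2 = ψ p.1}
      = {p : (Fin n → ℝ) × ℝ | (∀ i, p.1 i ∈ Set.Icc (0:ℝ) 1) ∧
          sInf (zuckerValues n ψ p.1) ≤ p.2 ∧ p.2 ≤ sSup (zuckerValues n ψ p.1)} := by
  ext ⟨x, z⟩
  change (x, z) ∈ convexHull ℝ (vertexGraph ψ) ↔ (∀ i, x i ∈ Icc 0 1) ∧ z ∈ Icc _ _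
  rw [mem_convexHull_vertexGraph_iff]
  constructor
  · intro hz
    have hx := zuckerValues_nonempty_iff.1 ⟨z, hz⟩
    exact ⟨hx, zuckerValues_eq_Icc ψ hx ▸ hz⟩
  · rintro ⟨hx, hz⟩
    exact (zuckerValues_eq_Icc ψ hx).symm ▸ hz
end

section
/- For disjoint vertex subsets S and T with s = |S| ≥ 1 and t = |T| ≥ 2, the generalized cut inequality (s−t)·Σ_{i∈S} x_i + (t−s−1)·Σ_{i∈T} x_i − Σ_{ij∈E(S)} y_{ij} + Σ_{ij∈E(S:T)} y_{ij} − Σ_{ij∈E(T)} y_{ij} ≤ (t−s)(t−s−1)/2 holds for all binary x ∈ {0,1}^n with y_{ij} = x_i x_j. -/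
/-!
At a binary point let `a` and `b` be the numbers of ones of `x` on `S` and on `T`. Since
`x i ^ 2 = x i`, the pair sums are `a (a - 1) / 2` and `b (b - 1) / 2` and the cross sum is `a b`,
so the left-hand side depends only on `a` and `b`. With `m = b - a - (t - s)`, the right-hand side
minus the left-hand side is `m (m + 1) / 2`, which is nonnegative because `m` is an integer.
-/

open Finset

theorem Int.mul_add_one_nonneg (m : ℤ) : 0 ≤ m * (m + 1) := by
  rcases le_or_gt 0 m with h | h <;> nlinarith

namespace Finset

variable {ι R : Type*}

theorem sq_sum_eq_two_mul_sum_lt_add_sum_sq [LinearOrder ι] [CommSemiring R]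
    (S : Finset ι) (x : ι → R) :
    (∑ i ∈ S, x i) ^ 2
      = 2 * (∑ i ∈ S, ∑ j ∈ S, if i < j then x i * x j else 0) + ∑ i ∈ S, x i ^ 2 := by
  have hsplit : ∀ i j, x i * x j = (if i < j then x i * x j else 0)
      + (if j < i then x j * x i else 0) + (if i = j then x i ^ 2 else 0) := by
    intro i j
    rcases lt_trichotomy i j with h | rfl | h
    · simp [h, h.not_gt, h.ne]
    · simp [sq]
    · simp [h, h.not_gt, h.ne', mul_comm]
  calc (∑ i ∈ S, x i) ^ 2 = ∑ i ∈ S, ∑ j ∈ S, x i * x j := by rw [sq, sum_mul_sum]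
    _ = (∑ i ∈ S, ∑ j ∈ S, if i < j then x i * x j else 0)
          + (∑ i ∈ S, ∑ j ∈ S, if j < i then x j * x i else 0)
          + ∑ i ∈ S, ∑ j ∈ S, if i = j then x i ^ 2 else 0 := by
      simp only [← sum_add_distrib, ← hsplit]
    _ = _ := by
      rw [sum_comm (f := fun i j => if j < i then x j * x i else 0)]
      simp [two_mul]

theorem exists_sum_eq_natCast_of_binary [Semiring R] (S : Finset ι) (x : ι → R)
    (hx : ∀ i, x i = 0 ∨ x i = 1) : ∃ k : ℕ, ∑ i ∈ S, x i = k := by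
  classical
  refine ⟨#{i ∈ S | x i = 1}, ?_⟩
  rw [natCast_card_filter]
  exact sum_congr rfl fun i _ => by rcases hx i with h | h <;> simp [h]

end Finset

theorem stmt12_general (n : ℕ) (S T : Finset (Fin n))
    (x : Fin n → ℝ) (hx : ∀ a, x a = 0 ∨ x a = 1) :
    ((S.card : ℝ) - (T.card : ℝ)) * (∑ i ∈ S, x i)
      + ((T.card : ℝ) - (S.card : ℝ) - 1) * (∑ i ∈ T, x i)
      - (∑ i ∈ S, ∑ j ∈ S, if i < j then x i * x j else 0)
      + (∑ i ∈ S, ∑ j ∈ T, x i * x j)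
      - (∑ i ∈ T, ∑ j ∈ T, if i < j then x i * x j else 0)
      ≤ ((T.card : ℝ) - (S.card : ℝ)) * ((T.card : ℝ) - (S.card : ℝ) - 1) / 2 := by
  have hsq : ∀ i, x i ^ 2 = x i := fun i => by rcases hx i with h | h <;> simp [h]
  have hpairS := sq_sum_eq_two_mul_sum_lt_add_sum_sq S x
  have hpairT := sq_sum_eq_two_mul_sum_lt_add_sum_sq T x
  simp only [hsq] at hpairS hpairT
  obtain ⟨a, ha⟩ := exists_sum_eq_natCast_of_binary S x hx
  obtain ⟨b, hb⟩ := exists_sum_eq_natCast_of_binary T x hx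
  have hgap : (0 : ℝ) ≤ ((b - a - (#T - #S) : ℤ) : ℝ) * ((b - a - (#T - #S) : ℤ) + 1) := by
    exact_mod_cast Int.mul_add_one_nonneg (b - a - (#T - #S))
  push_cast at hgap
  rw [← sum_mul_sum]
  simp only [ha, hb] at hpairS hpairT ⊢
  linear_combination (1 / 2 : ℝ) * hgap + (1 / 2 : ℝ) * hpairS + (1 / 2 : ℝ) * hpairT

/-- Padberg's generalized cut inequality: for disjoint `S`, `T` with `s = |S| ≥ 1`
and `t = |T| ≥ 2`,
`(s−t)∑_{i∈S} x_i + (t−s−1)∑_{i∈T} x_i − ∑_{i<j∈S} x_i x_j + ∑_{i∈S,j∈T} x_i x_j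
  − ∑_{i<j∈T} x_i x_j ≤ (t−s)(t−s−1)/2` holds at every binary point. -/
theorem stmt12 (n : ℕ) (S T : Finset (Fin n)) (hST : Disjoint S T)
    (hS : 1 ≤ S.card) (hT : 2 ≤ T.card)
    (x : Fin n → ℝ) (hx : ∀ a, x a = 0 ∨ x a = 1) :
    ((S.card : ℝ) - (T.card : ℝ)) * (∑ i ∈ S, x i)
      + ((T.card : ℝ) - (S.card : ℝ) - 1) * (∑ i ∈ T, x i)
      - (∑ i ∈ S, ∑ j ∈ S, if i < j then x i * x j else 0)
      + (∑ i ∈ S, ∑ j ∈ T, x i * x j)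
      - (∑ i ∈ T, ∑ j ∈ T, if i < j then x i * x j else 0)
      ≤ ((T.card : ℝ) - (S.card : ℝ)) * ((T.card : ℝ) - (S.card : ℝ) - 1) / 2 :=
  stmt12_general n S T x hx
end
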